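/- arXiv:1808.03351 — 2 statements merged into one kernel-verified Lean document; each statement's English description precedes it below -/
import Mathlib

section
/- Let K ∈ ℝ^{M×M}, σ ∈ ℝ, and let f : Fin N → Fin M and g : Fin L → Fin M be complementary injections with selection matrices W and V. If α ∈ ℝ^M satisfies (K + σ² • I_M) α = y for some y ∈ ℝ^M and V α = 0, then the selected subvector α_X = W α satisfies (W K Wᵀ + σ² • I_N) α_X = W y; that is, α_X solves the gappy training system (K_{X,X} + σ²I_N) α_X = y_X. -/
open Matrix

/-- The selection matrix of an injection `f : Fin N → Fin M`:
`W i j = 1` if `j = f i` and `0` otherwise. -/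
def selMatrix {N M : ℕ} (f : Fin N → Fin M) : Matrix (Fin N) (Fin M) ℝ :=
  Matrix.of fun i j => if j = f i then 1 else 0

lemma selMatrix_mulVec {N M : ℕ} (f : Fin N → Fin M) (v : Fin M → ℝ) (i : Fin N) :
    (selMatrix f *ᵥ v) i = v (f i) := by
  simp [selMatrix, mulVec, dotProduct, ite_mul]

/-- If `α ∈ ℝ^M` satisfies `(K + σ²I_M) α = y` and `V α = 0` (the components of `α` at
the gap indices vanish), then the selected subvector `αX = W α` satisfies the gappy
training system `(W K Wᵀ + σ²I_N) αX = W y`, i.e. `(K_{X,X} + σ²I_N) αX = yX`. -/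
theorem selected_subvector_solves_gappy_system {N L M : ℕ}
    (K : Matrix (Fin M) (Fin M) ℝ) (σ : ℝ)
    (f : Fin N → Fin M) (g : Fin L → Fin M)
    (hf : Function.Injective f) (hg : Function.Injective g)
    (hdisj : ∀ i j, f i ≠ g j)
    (hcover : ∀ m : Fin M, (∃ i, f i = m) ∨ (∃ j, g j = m))
    (α y : Fin M → ℝ)
    (hsol : (K + σ ^ 2 • (1 : Matrix (Fin M) (Fin M) ℝ)) *ᵥ α = y)
    (hgap : selMatrix g *ᵥ α = 0) :
    (selMatrix f * K * (selMatrix f)ᵀ + σ ^ 2 • (1 : Matrix (Fin N) (Fin N) ℝ)) *ᵥ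
        (selMatrix f *ᵥ α) = selMatrix f *ᵥ y := by
  have hrec : (selMatrix f)ᵀ *ᵥ (selMatrix f *ᵥ α) = α := by
    funext m
    have : ((selMatrix f)ᵀ *ᵥ (selMatrix f *ᵥ α)) m
        = ∑ i, (if m = f i then (1:ℝ) else 0) * α (f i) := by
      simp [mulVec, dotProduct, transpose, selMatrix, selMatrix_mulVec]
    rw [this]
    rcases hcover m with ⟨i0, hi0⟩ | ⟨j0, hj0⟩
    · rw [Finset.sum_eq_single i0]
      · simp [hi0]
      · intro b _ hb
        have : m ≠ f b := by
          rw [← hi0]; exact fun h => hb (hf h.symm)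
        simp [this]
      · simp
    · have hα : α m = 0 := by
        have := congrFun hgap j0
        rw [selMatrix_mulVec] at this
        rw [← hj0]; exact this
      rw [hα]
      apply Finset.sum_eq_zero
      intro i _
      have : m ≠ f i := by rw [← hj0]; exact fun h => hdisj i j0 (h.symm)
      simp [this]
  rw [← hsol, add_mulVec, add_mulVec, mulVec_mulVec, ← mulVec_mulVec, ← mulVec_mulVec,
    hrec, Matrix.mulVec_add, smul_mulVec, smul_mulVec, one_mulVec, one_mulVec,
    Matrix.mulVec_smul]
  rw [← mulVec_mulVec]
end

section
/- (Fill-Gaps Proposition) Let K ∈ ℝ^{M×M} be symmetric positive semidefinite, σ > 0 (so K + σ²I_M is invertible with inverse B), and let f : Fin N → Fin M and g : Fin L → Fin M be complementary injections with selection matrices W and V. Given y_X ∈ ℝ^N, suppose y_Z ∈ ℝ^L satisfies the fill-gaps system V B Vᵀ y_Z = −V B Wᵀ y_X. Then the vector α = B (Wᵀ y_X + Vᵀ y_Z) satisfies V α = 0 and (W K Wᵀ + σ² • I_N)(W α) = y_X; i.e., α_X = Wα solves the gappy Gaussian-process training system (K_{X,X} + σ²I_N) α_X = y_X. -/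
open Matrix

lemma sel_mul_tr_self {N M : ℕ} (f : Fin N → Fin M) (hf : Function.Injective f) :
    selMatrix f * (selMatrix f)ᵀ = 1 := by
  ext i j
  simp [selMatrix, Matrix.mul_apply, Matrix.one_apply, ite_and, hf.eq_iff, eq_comm]

lemma sel_mul_tr_disj {N L M : ℕ} (f : Fin N → Fin M) (g : Fin L → Fin M)
    (hdisj : ∀ i j, f i ≠ g j) :
    selMatrix f * (selMatrix g)ᵀ = 0 := by
  ext i j
  simp only [selMatrix, Matrix.mul_apply, transpose_apply, of_apply, ite_mul, one_mul,
    zero_mul, Matrix.zero_apply]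
  rw [Finset.sum_ite_eq' Finset.univ (f i)]
  simp only [Finset.mem_univ, if_true]
  exact if_neg (hdisj i j)

lemma sel_block_sum {N L M : ℕ} (f : Fin N → Fin M) (g : Fin L → Fin M)
    (hf : Function.Injective f) (hg : Function.Injective g)
    (hdisj : ∀ i j, f i ≠ g j)
    (hcover : ∀ m : Fin M, (∃ i, f i = m) ∨ (∃ j, g j = m)) :
    (selMatrix f)ᵀ * selMatrix f + (selMatrix g)ᵀ * selMatrix g = 1 := by
  ext m m'
  simp only [Matrix.add_apply, selMatrix, Matrix.mul_apply, transpose_apply, of_apply,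
    Matrix.one_apply]
  rcases hcover m with ⟨i₀, hi₀⟩ | ⟨j₀, hj₀⟩
  · have h1 : ∑ i, (if m = f i then (1:ℝ) else 0) * (if m' = f i then 1 else 0)
        = if m = m' then 1 else 0 := by
      rw [Finset.sum_eq_single i₀]
      · simp [hi₀.symm, eq_comm]
      · intro i _ hne
        have : m ≠ f i := fun h => hne (hf (hi₀.trans h)).symm
        simp [this]
      · simp
    have h2 : ∑ j, (if m = g j then (1:ℝ) else 0) * (if m' = g j then 1 else 0) = 0 := by
      apply Finset.sum_eq_zero
      intro j _
      have : m ≠ g j := fun h => hdisj i₀ j (hi₀.trans h)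
      simp [this]
    rw [h1, h2, add_zero]
  · have h1 : ∑ i, (if m = f i then (1:ℝ) else 0) * (if m' = f i then 1 else 0) = 0 := by
      apply Finset.sum_eq_zero
      intro i _
      have : m ≠ f i := fun h => hdisj i j₀ (h ▸ hj₀.symm ▸ rfl)
      simp [this]
    have h2 : ∑ j, (if m = g j then (1:ℝ) else 0) * (if m' = g j then 1 else 0)
        = if m = m' then 1 else 0 := by
      rw [Finset.sum_eq_single j₀]
      · simp [hj₀.symm, eq_comm]
      · intro j _ hne
        have : m ≠ g j := fun h => hne (hg (hj₀.trans h)).symm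
        simp [this]
      · simp
    rw [h1, h2, zero_add]

/-- **Fill-Gaps.** Let `K` be symmetric positive semidefinite and `σ > 0`, with
`B = (K + σ²I_M)⁻¹`, and let `f` (training indices) and `g` (gap indices) be
complementary injections with selection matrices `W` and `V`.  If `yZ` satisfies the
fill-gaps system `V B Vᵀ yZ = −V B Wᵀ yX`, then `α = B (Wᵀ yX + Vᵀ yZ)` satisfies
`V α = 0` and the selected subvector `αX = W α` solves the gappy training system
`(W K Wᵀ + σ²I_N) αX = yX`. -/
theorem fill_gaps {N L M : ℕ}
    (K : Matrix (Fin M) (Fin M) ℝ) (hK : K.PosSemidef) (σ : ℝ) (hσ : 0 < σ)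
    (f : Fin N → Fin M) (g : Fin L → Fin M)
    (hf : Function.Injective f) (hg : Function.Injective g)
    (hdisj : ∀ i j, f i ≠ g j)
    (hcover : ∀ m : Fin M, (∃ i, f i = m) ∨ (∃ j, g j = m))
    (B : Matrix (Fin M) (Fin M) ℝ)
    (hB : B = (K + σ ^ 2 • (1 : Matrix (Fin M) (Fin M) ℝ))⁻¹)
    (yX : Fin N → ℝ) (yZ : Fin L → ℝ)
    (hfill : (selMatrix g * B * (selMatrix g)ᵀ) *ᵥ yZ =
      -((selMatrix g * B * (selMatrix f)ᵀ) *ᵥ yX))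
    (α : Fin M → ℝ)
    (hα : α = B *ᵥ ((selMatrix f)ᵀ *ᵥ yX + (selMatrix g)ᵀ *ᵥ yZ)) :
    selMatrix g *ᵥ α = 0 ∧
      (selMatrix f * K * (selMatrix f)ᵀ + σ ^ 2 • (1 : Matrix (Fin N) (Fin N) ℝ)) *ᵥ
        (selMatrix f *ᵥ α) = yX := by
  set W := selMatrix f with hW
  set V := selMatrix g with hV
  set A := K + σ ^ 2 • (1 : Matrix (Fin M) (Fin M) ℝ) with hAdef
  -- invertibility of A
  have h1 : (σ ^ 2 • (1 : Matrix (Fin M) (Fin M) ℝ)).PosDef := by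
    rw [smul_one_eq_diagonal]
    exact posDef_diagonal_iff.mpr fun i => by positivity
  have hpd : A.PosDef := Matrix.PosDef.posSemidef_add hK h1
  have hdet : IsUnit A.det := hpd.det_pos.ne'.isUnit
  have hAB : A * B = 1 := by rw [hB]; exact Matrix.mul_nonsing_inv A hdet
  -- selection matrix identities
  have hWW : W * Wᵀ = 1 := sel_mul_tr_self f hf
  have hWV : W * Vᵀ = 0 := sel_mul_tr_disj f g hdisj
  have hsum : Wᵀ * W + Vᵀ * V = 1 := sel_block_sum f g hf hg hdisj hcover
  set u : Fin M → ℝ := Wᵀ *ᵥ yX + Vᵀ *ᵥ yZ with hu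
  -- first claim: V α = 0
  have hVα : V *ᵥ α = 0 := by
    rw [hα, mulVec_mulVec, hu, mulVec_add, mulVec_mulVec, mulVec_mulVec, hfill]
    exact add_neg_cancel _
  refine ⟨hVα, ?_⟩
  -- A α = u
  have hAα : A *ᵥ α = u := by
    rw [hα, mulVec_mulVec, hAB, one_mulVec]
  -- Wᵀ W α = α
  have hWTW : Wᵀ *ᵥ (W *ᵥ α) = α := by
    have h := congrArg (· *ᵥ α) hsum
    simp only [add_mulVec, one_mulVec] at h
    have hz : (Vᵀ * V) *ᵥ α = 0 := by
      rw [← mulVec_mulVec, hVα, mulVec_zero]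
    rw [hz, add_zero] at h
    rw [mulVec_mulVec, h]
  -- second claim
  calc (W * K * Wᵀ + σ ^ 2 • (1 : Matrix (Fin N) (Fin N) ℝ)) *ᵥ (W *ᵥ α)
      = (W * K * Wᵀ) *ᵥ (W *ᵥ α) + σ ^ 2 • (W *ᵥ α) := by
        rw [add_mulVec, smul_mulVec, one_mulVec]
    _ = W *ᵥ (K *ᵥ α) + W *ᵥ (σ ^ 2 • α) := by
        rw [← mulVec_mulVec, ← mulVec_mulVec, hWTW, mulVec_mulVec, mulVec_smul]
    _ = W *ᵥ (A *ᵥ α) := by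
        rw [← mulVec_add, hAdef, add_mulVec, smul_mulVec, one_mulVec]
    _ = yX := by
        rw [hAα, hu, mulVec_add, mulVec_mulVec, mulVec_mulVec, hWW, hWV,
          one_mulVec, zero_mulVec, add_zero]
end
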